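/- arXiv:2211.08907 — 7 statements merged into one kernel-verified Lean document; each statement's English description precedes it below -/
import Mathlib

section
/- A positive integer n is a cobalancing number (i.e., 1+2+⋯+n = (n+1)+⋯+(n+r) for some positive integer r) if and only if 8n²+8n+1 is a perfect square. -/
lemma gauss_Ioc (m : ℕ) : 2 * ∑ i ∈ Finset.Ioc 0 m, i = m * (m + 1) := by
  induction m with
  | zero => simp
  | succ m ih =>
    rw [Finset.sum_Ioc_succ_top (Nat.zero_le _)]
    have : (m + 1) * (m + 1 + 1) = m * (m + 1) + 2 * (m + 1) := by ring
    rw [this, ← ih]; ring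

lemma Icc_eq_Ioc (a b : ℕ) : Finset.Icc (a + 1) b = Finset.Ioc a b := by
  ext x; simp [Nat.succ_le_iff]

theorem cobalancing_iff_perfect_square (n : ℕ) (hn : 0 < n) :
    (∃ r : ℕ, 0 < r ∧ ∑ i ∈ Finset.Icc 1 n, i = ∑ i ∈ Finset.Icc (n + 1) (n + r), i) ↔
    ∃ k : ℕ, 8 * n ^ 2 + 8 * n + 1 = k ^ 2 := by
  have key : ∀ r : ℕ, (∑ i ∈ Finset.Icc 1 n, i = ∑ i ∈ Finset.Icc (n + 1) (n + r), i) ↔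
      2 * (n * (n + 1)) = (n + r) * (n + r + 1) := by
    intro r
    have h1 : (Finset.Icc 1 n : Finset ℕ) = Finset.Ioc 0 n := Icc_eq_Ioc 0 n
    have h2 : (Finset.Icc (n + 1) (n + r) : Finset ℕ) = Finset.Ioc n (n + r) :=
      Icc_eq_Ioc n (n + r)
    have h3 : ∑ i ∈ Finset.Ioc 0 n, i + ∑ i ∈ Finset.Ioc n (n + r), i
        = ∑ i ∈ Finset.Ioc 0 (n + r), i :=
      Finset.sum_Ioc_consecutive _ (Nat.zero_le n) (Nat.le_add_right n r)
    have g1 := gauss_Ioc n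
    have g2 := gauss_Ioc (n + r)
    rw [h1, h2]
    omega
  constructor
  · rintro ⟨r, hr, h⟩
    rw [key r] at h
    refine ⟨2 * (n + r) + 1, ?_⟩
    nlinarith [h]
  · rintro ⟨k, hk⟩
    have hodd : k % 2 = 1 := by
      rcases Nat.even_or_odd k with he | ho
      · obtain ⟨c, rfl⟩ := he
        have h4 : (c + c) ^ 2 = 4 * (c * c) := by ring
        omega
      · exact Nat.odd_iff.mp ho
    obtain ⟨m, hm⟩ : ∃ m, k = 2 * m + 1 := ⟨k / 2, by omega⟩
    subst hm
    have hmn : m * (m + 1) = 2 * (n * (n + 1)) := by nlinarith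
    have hgt : n < m := by nlinarith
    refine ⟨m - n, by omega, ?_⟩
    rw [key (m - n)]
    have hnm : n + (m - n) = m := by omega
    rw [hnm]
    omega
end

section
/- For every n ≥ 1, 8·B_n² + 1 is a perfect square, where B_n satisfies B_0 = 0, B_1 = 1, B_{n+1} = 6B_n − B_{n−1}. -/
def B : ℕ → ℤ
  | 0 => 0
  | 1 => 1
  | (n+2) => 6 * B (n+1) - B n

def C : ℕ → ℤ
  | 0 => 1
  | 1 => 3
  | (n+2) => 6 * C (n+1) - C n

def b : ℕ → ℤ
  | 0 => 0
  | 1 => 0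
  | (n+2) => 6 * b (n+1) - b n + 2

def c : ℕ → ℤ
  | 0 => -1
  | 1 => 1
  | (n+2) => 6 * c (n+1) - c n

def P : ℕ → ℤ
  | 0 => 0
  | 1 => 1
  | (n+2) => 2 * P (n+1) + P n

lemma step (n : ℕ) : C (n+1) = 3 * C n + 8 * B n ∧ B (n+1) = 3 * B n + C n := by
  induction n with
  | zero => simp [B, C]
  | succ m ih =>
    obtain ⟨h1, h2⟩ := ih
    constructor
    · show 6 * C (m+1) - C m = _
      linarith
    · show 6 * B (m+1) - B m = _
      linarith

lemma pell (n : ℕ) : C n ^ 2 - 8 * B n ^ 2 = 1 := by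
  induction n with
  | zero => simp [B, C]
  | succ m ih =>
    obtain ⟨h1, h2⟩ := step m
    rw [h1, h2]
    ring_nf
    ring_nf at ih
    linarith

theorem eight_B_sq_add_one_is_square (n : ℕ) (hn : 1 ≤ n) :
    ∃ k : ℤ, 8 * B n ^ 2 + 1 = k ^ 2 := by
  exact ⟨C n, by linarith [pell n]⟩
end

section
/- For every n ≥ 1, 8·b_n² + 8·b_n + 1 is a perfect square, where b_n satisfies b_0 = b_1 = 0, b_{n+1} = 6b_n − b_{n−1} + 2. -/
lemma bc_step : ∀ n, b (n+1) = 3 * b n + c n + 1 ∧ c (n+1) = 8 * b n + 3 * c n + 4 := by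
  intro n
  induction n with
  | zero => simp [b, c]
  | succ n ih =>
    obtain ⟨h1, h2⟩ := ih
    constructor <;> show (fun m => _) (n+2) = _ <;> simp only [b, c] <;> linarith

lemma bc_sq : ∀ n, c n ^ 2 = 8 * b n ^ 2 + 8 * b n + 1 := by
  intro n
  induction n with
  | zero => simp [b, c]
  | succ n ih =>
    obtain ⟨h1, h2⟩ := bc_step n
    rw [h1, h2]; nlinarith [ih]

theorem eight_b_sq_add_eight_b_add_one_is_square (n : ℕ) (hn : 1 ≤ n) :
    ∃ k : ℤ, 8 * b n ^ 2 + 8 * b n + 1 = k ^ 2 := ⟨c n, (bc_sq n).symm⟩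
end

section
/- For every n ≥ 1, 8·(B_{n−1}+C_{n−1})² − 7 = (8B_{n−1}+C_{n−1})² and 8·(C_n − B_n)² − 7 = (8B_n − C_n)², so B_{n−1}+C_{n−1} and C_n − B_n are almost balancing numbers of second type. -/
lemma BC_step : ∀ n, B (n+1) = 3 * B n + C n ∧ C (n+1) = 3 * C n + 8 * B n := by
  intro n
  induction n with
  | zero => constructor <;> simp [B, C]
  | succ k ih =>
    obtain ⟨h1, h2⟩ := ih
    constructor
    · show 6 * B (k+1) - B k = _
      rw [h1, h2]; ring
    · show 6 * C (k+1) - C k = _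
      rw [h1, h2]; ring

lemma BC_inv : ∀ n, C n ^ 2 = 8 * B n ^ 2 + 1 := by
  intro n
  induction n with
  | zero => simp [B, C]
  | succ k ih =>
    obtain ⟨h1, h2⟩ := BC_step k
    rw [h1, h2]; nlinarith [ih]

theorem almost_balancing_second_type (n : ℕ) (hn : 1 ≤ n) :
    8 * (B (n - 1) + C (n - 1)) ^ 2 - 7 = (8 * B (n - 1) + C (n - 1)) ^ 2 ∧
    8 * (C n - B n) ^ 2 - 7 = (8 * B n - C n) ^ 2 := by
  obtain ⟨m, rfl⟩ := Nat.exists_eq_add_of_le hn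
  simp only [Nat.add_sub_cancel_left] 
  have h1 := BC_inv m
  have h2 := BC_inv (1 + m)
  constructor <;> nlinarith [h1, h2]
end

section
/- For every n ≥ 1, 8·(2b_{n+1} − b_n)² + 8·(2b_{n+1} − b_n) + 9 = (c_{n+2} − 4c_{n+1})², where b_n are cobalancing numbers and c_n Lucas-cobalancing numbers; hence 2b_{n+1} − b_n is an almost cobalancing number of first type. -/
lemma key : ∀ n : ℕ, c n ^ 2 = 8 * b n ^ 2 + 8 * b n + 1 ∧
    c (n+1) ^ 2 = 8 * b (n+1) ^ 2 + 8 * b (n+1) + 1 ∧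
    c n * c (n+1) = 8 * b n * b (n+1) + 4 * b n + 4 * b (n+1) - 1 := by
  intro n
  induction n with
  | zero => norm_num [b, c]
  | succ k ih =>
    obtain ⟨h1, h2, h3⟩ := ih
    refine ⟨h2, ?_, ?_⟩
    · show (6 * c (k+1) - c k) ^ 2 = 8 * (6 * b (k+1) - b k + 2) ^ 2 +
        8 * (6 * b (k+1) - b k + 2) + 1
      linear_combination 36 * h2 + h1 - 12 * h3
    · show c (k+1) * (6 * c (k+1) - c k) =
        8 * b (k+1) * (6 * b (k+1) - b k + 2) + 4 * b (k+1) +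
          4 * (6 * b (k+1) - b k + 2) - 1
      linear_combination 6 * h2 - h3

theorem almost_cobalancing_first_type_even (n : ℕ) (hn : 1 ≤ n) :
    8 * (2 * b (n + 1) - b n) ^ 2 + 8 * (2 * b (n + 1) - b n) + 9 =
      (c (n + 2) - 4 * c (n + 1)) ^ 2 := by
  obtain ⟨h1, h2, h3⟩ := key n
  show _ = (6 * c (n+1) - c n - 4 * c (n+1)) ^ 2
  linear_combination 4 * h3 - 4 * h2 - h1
end

section
/- For every n ≥ 1, 8·(4b_n − b_{n−1} + 1)² + 8·(4b_n − b_{n−1} + 1) + 9 = (c_{n+1} − 2c_n)². -/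
lemma Lb (n : ℕ) : b (n+1)^2 + b n^2 - 6 * b (n+1) * b n - 2 * b (n+1) - 2 * b n = 0 := by
  induction n with
  | zero => simp [b]
  | succ k ih =>
    have hb : b (k+1+1) = 6 * b (k+1) - b k + 2 := rfl
    linear_combination ih + (b (k+1+1) - b k) * hb

lemma Lc (n : ℕ) : c (n+1) = 3 * b (n+1) - b n + 1 ∧ c (n+2) = 3 * b (n+2) - b (n+1) + 1 := by
  induction n with
  | zero => constructor <;> simp [b, c]
  | succ k ih =>
    refine ⟨ih.2, ?_⟩
    have hc : c (k+1+2) = 6 * c (k+1+1) - c (k+1) := rfl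
    have hb : b (k+1+2) = 6 * b (k+1+1) - b (k+1) + 2 := rfl
    have hb0 : b (k+2) = 6 * b (k+1) - b k + 2 := rfl
    rw [hc, ih.1, ih.2]; linear_combination (-3) * hb + hb0

theorem almost_cobalancing_first_type_odd (n : ℕ) (hn : 1 ≤ n) :
    8 * (4 * b n - b (n - 1) + 1) ^ 2 + 8 * (4 * b n - b (n - 1) + 1) + 9 =
      (c (n + 1) - 2 * c n) ^ 2 := by
  obtain ⟨m, rfl⟩ : ∃ m, n = m + 1 := ⟨n - 1, (Nat.succ_pred_eq_of_pos hn).symm⟩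
  have h1 := (Lc m).1
  have h2 := (Lc m).2
  have hb : b (m+2) = 6 * b (m+1) - b m + 2 := rfl
  have hQ := Lb m
  simp only [Nat.add_sub_cancel]
  rw [show m + 1 + 1 = m + 2 from rfl, h1, h2, hb]
  nlinarith [hQ]
end

section
/- For every n ≥ 1, b_n = (P_{2n−1} − 1)/2, i.e., 2b_n + 1 = P_{2n−1}, where b_n are cobalancing numbers and P_n Pell numbers. -/
lemma aux : ∀ n : ℕ, 2 * b (n+1) + 1 = P (2*n+1) := by
  intro n
  induction n using Nat.twoStepInduction with
  | zero => simp [b, P]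
  | one => norm_num [b, P]
  | more n ih1 ih2 =>
    have h1 : b (n+3) = 6 * b (n+2) - b (n+1) + 2 := rfl
    have hP : P (2*n+5) = 6 * P (2*n+3) - P (2*n+1) := by
      have a1 : P (2*n+5) = 2 * P (2*n+4) + P (2*n+3) := rfl
      have a2 : P (2*n+4) = 2 * P (2*n+3) + P (2*n+2) := rfl
      have a3 : P (2*n+3) = 2 * P (2*n+2) + P (2*n+1) := rfl
      linarith
    have g : 2*(n+2)+1 = 2*n+5 := by omega
    rw [g, hP]
    have e2 : 2*(n+1)+1 = 2*n+3 := by omega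
    rw [e2, show n+1+1 = n+2 from rfl] at ih2
    rw [show n+2+1 = n+3 from rfl, h1]
    linarith

theorem cobalancing_pell_relation (n : ℕ) (hn : 1 ≤ n) :
    2 * b n + 1 = P (2 * n - 1) := by
  obtain ⟨m, rfl⟩ := Nat.exists_eq_add_of_le hn
  have e : 1 + m = m + 1 := by omega
  rw [e, aux m]
  congr 1
end
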